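/- Let p be a prime, z an integer coprime to p, α ≥ 1, β ≥ 0, and let M < p be a positive integer. Suppose that for every integer y with 1 ≤ y < p, |Σ_{m≤M, m∈ℬ(α,β)} e_p(y·m⁻¹)| ≤ M(M − β − α)/(p·(log p)·α), where the sum is over m ≤ M lying in the Beatty set ℬ(α,β) (all such m are coprime to p since m < p). Then there exists a pair (m, m̃) of integers with 1 ≤ m, m̃ < p, m ∈ ℬ(α,β), m·m̃ ≡ z (mod p), and max{m, m̃} ≤ M. -/

import Mathlib

def Beatty (α β : ℝ) : Set ℤ := {m : ℤ | ∃ n : ℕ, 1 ≤ n ∧ m = ⌊(n : ℝ) * α + β⌋}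

noncomputable def ep (p : ℕ) (t : ZMod p) : ℂ :=
  Complex.exp (2 * Real.pi * Complex.I * (t.val : ℂ) / p)

attribute [local instance] Classical.propDecidable

/-!
Count the solutions of `n = z * m⁻¹` in `ZMod p` with `1 ≤ n ≤ M` and `m` in
`S = ℬ(α, β) ∩ [1, M]` by orthogonality of the additive characters `y ↦ e_p(y t)`. The frequency
`y = 0` contributes `M * #S`. A frequency `y ≠ 0` contributes the product of a geometric sum
over `n`, of size at most `p / (2 min(v, p - v))` where `v` is the residue of `y`, and of a sum
over `S` that the hypothesis bounds. The geometric bounds add up to `p * H_{(p-1)/2} ≤ p log p`.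
So the frequencies `y ≠ 0` contribute at most `M (M - β - α) / α`. This is less than `M * #S`,
because `n ↦ ⌊n α + β⌋` is injective and maps `[1, (M - β) / α]` into `S`. Hence some
solution exists.
-/

open Finset Real

lemma ep_eq_stdAddChar (p : ℕ) [NeZero p] (t : ZMod p) : ep p t = ZMod.stdAddChar t :=
  (ZMod.toCircle_apply t).symm

lemma AddChar.exists_eq_of_sum_norm_mul_norm_lt {R : Type*} [CommRing R] [Fintype R]
    [DecidableEq R] {ψ : AddChar R ℂ} (hψ : ψ.IsPrimitive) {ι κ : Type*} (s : Finset ι)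
    (t : Finset κ) (f : ι → R) (g : κ → R)
    (h : ∑ y ∈ univ.erase 0, ‖∑ i ∈ s, ψ (y * f i)‖ * ‖∑ j ∈ t, ψ (-(y * g j))‖
      < #s * #t) :
    ∃ i ∈ s, ∃ j ∈ t, f i = g j := by
  by_contra! hne
  -- Expanding the product, the sum over all `y` counts the pairs with `f i = g j`.
  have horth : ∑ y, (∑ i ∈ s, ψ (y * f i)) * ∑ j ∈ t, ψ (-(y * g j)) = 0 := by
    simp_rw [sum_mul_sum, ← AddChar.map_add_eq_mul, ← sub_eq_add_neg, ← mul_sub]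
    rw [sum_comm]
    refine sum_eq_zero fun i hi => ?_
    rw [sum_comm]
    refine sum_eq_zero fun j hj => ?_
    rw [AddChar.sum_mulShift _ hψ, if_neg (sub_ne_zero.2 (hne i hi j hj)), Nat.cast_zero]
  rw [← add_sum_erase _ _ (mem_univ 0)] at horth
  simp only [zero_mul, neg_zero, AddChar.map_zero_eq_one, sum_const, nsmul_one] at horth
  refine h.not_ge ?_
  calc (#s * #t : ℝ) = ‖(#s * #t : ℂ)‖ := by simp
    _ = ‖∑ y ∈ univ.erase 0, (∑ i ∈ s, ψ (y * f i)) * ∑ j ∈ t, ψ (-(y * g j))‖ := by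
      rw [eq_neg_of_add_eq_zero_left horth, norm_neg]
    _ ≤ _ := (norm_sum_le _ _).trans_eq (by simp only [norm_mul])

lemma two_div_pi_mul_min_le_sin {x : ℝ} (hx₀ : 0 ≤ x) (hxπ : x ≤ π) :
    2 / π * min x (π - x) ≤ sin x := by
  rcases le_total x (π / 2) with h | h
  · exact (mul_le_mul_of_nonneg_left (min_le_left _ _) (by positivity)).trans (mul_le_sin hx₀ h)
  · rw [← sin_pi_sub]
    exact (mul_le_mul_of_nonneg_left (min_le_right _ _) (by positivity)).trans
      (mul_le_sin (by linarith) (by linarith))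

lemma norm_sub_one_mul_norm_sum_Icc_pow_le {w : ℂ} (hw : ‖w‖ = 1) (M : ℕ) :
    ‖w - 1‖ * ‖∑ j ∈ Icc 1 M, w ^ j‖ ≤ 2 := by
  have h : (w - 1) * ∑ j ∈ Icc 1 M, w ^ j = w ^ (M + 1) - w := by
    induction M with
    | zero => simp
    | succ M ih => rw [sum_Icc_succ_top (by omega), mul_add, ih]; ring
  rw [← norm_mul, h]
  calc ‖w ^ (M + 1) - w‖ ≤ ‖w ^ (M + 1)‖ + ‖w‖ := norm_sub_le _ _
    _ = 2 := by rw [norm_pow, hw, one_pow]; norm_num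

lemma four_mul_min_div_le_norm_stdAddChar_sub_one {N : ℕ} [NeZero N] (y : ZMod N) :
    4 * min (y.val : ℝ) (N - y.val) / N ≤ ‖ZMod.stdAddChar y - 1‖ := by
  have hN : (0 : ℝ) < N := by exact_mod_cast Nat.pos_of_neZero N
  have hv : (y.val : ℝ) < N := by exact_mod_cast y.val_lt
  set x := π * y.val / N
  have hx₀ : 0 ≤ x := by positivity
  have hxπ : x ≤ π := by
    rw [div_le_iff₀ hN]; nlinarith [pi_pos]
  have hnorm : ‖ZMod.stdAddChar y - 1‖ = 2 * sin x := by
    rw [ZMod.stdAddChar_apply, ZMod.toCircle_apply,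
      show 2 * π * Complex.I * y.val / N = Complex.I * ((2 * x : ℝ) : ℂ) by
        simp only [x]; push_cast; ring,
      Complex.norm_exp_I_mul_ofReal_sub_one, mul_div_cancel_left₀ _ two_ne_zero, norm_mul,
      Real.norm_two, Real.norm_of_nonneg (sin_nonneg_of_nonneg_of_le_pi hx₀ hxπ)]
  have hmin : min x (π - x) = π / N * min (y.val : ℝ) (N - y.val) := by
    rw [mul_min_of_nonneg _ _ (by positivity : 0 ≤ π / N)]
    congr 1 <;> (simp only [x]; field_simp)
  rw [hnorm]
  have hjordan := two_div_pi_mul_min_le_sin hx₀ hxπ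
  rw [hmin] at hjordan
  calc 4 * min (y.val : ℝ) (N - y.val) / N
        = 2 * (2 / π * (π / N * min (y.val : ℝ) (N - y.val))) := by field_simp; ring
    _ ≤ 2 * sin x := by gcongr

lemma norm_sum_Icc_stdAddChar_mul_le {N : ℕ} [NeZero N] {y : ZMod N} (hy : y ≠ 0) (M : ℕ) :
    ‖∑ n ∈ Icc 1 M, ZMod.stdAddChar (y * (n : ZMod N))‖
      ≤ N / (2 * min (y.val : ℝ) (N - y.val)) := by
  have hN : (0 : ℝ) < N := by exact_mod_cast Nat.pos_of_neZero N
  have hmin : 0 < min (y.val : ℝ) (N - y.val) := by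
    have : (y.val : ℝ) < N := by exact_mod_cast y.val_lt
    have : (0 : ℝ) < y.val := by exact_mod_cast Nat.pos_of_ne_zero ((ZMod.val_ne_zero y).2 hy)
    exact lt_min (by assumption) (by linarith)
  have hpow : ∀ n : ℕ, ZMod.stdAddChar (y * (n : ZMod N)) = ZMod.stdAddChar y ^ n := fun n => by
    rw [mul_comm, ← nsmul_eq_mul, AddChar.map_nsmul_eq_pow]
  simp only [hpow]
  have h := (mul_le_mul_of_nonneg_right (four_mul_min_div_le_norm_stdAddChar_sub_one y)
    (norm_nonneg _)).trans
    (norm_sub_one_mul_norm_sum_Icc_pow_le (ZMod.stdAddChar_apply y ▸ Circle.norm_coe _) M)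
  rw [div_mul_eq_mul_div, div_le_iff₀ hN] at h
  rw [le_div_iff₀ (by positivity)]
  linarith

lemma harmonic_le_log_two_mul_add_one (n : ℕ) : (harmonic n : ℝ) ≤ log (2 * n + 1) := by
  induction n with
  | zero => simp
  | succ n ih =>
    -- `2 x / (x + 2) ≤ log (1 + x)` at `x = 2 / (2 n + 1)` is exactly this step.
    have hstep : ((n : ℝ) + 1)⁻¹ ≤ log (2 * n + 3) - log (2 * n + 1) := by
      have h := le_log_one_add_of_nonneg (x := 2 / (2 * n + 1)) (by positivity)
      rw [← log_div (by positivity) (by positivity)]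
      convert h using 1
      · field_simp; ring
      · congr 1; field_simp; ring
    push_cast [harmonic_succ]
    rw [show (2 : ℝ) * (n + 1) + 1 = 2 * n + 3 by ring]
    linarith

lemma sum_Icc_inv_two_mul_min_eq_harmonic (h : ℕ) :
    ∑ v ∈ Icc 1 (2 * h), (2 * min (v : ℝ) ((2 * h + 1 : ℕ) - v))⁻¹ = harmonic h := by
  set f : ℕ → ℝ := fun v => (2 * min (v : ℝ) ((2 * h + 1 : ℕ) - v))⁻¹
  have hsymm : ∀ v ≤ 2 * h + 1, f (2 * h + 1 - v) = f v := fun v hv => by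
    simp only [f, Nat.cast_sub hv, sub_sub_cancel, min_comm]
  have hlow : ∀ v ≤ h, f v = (2 * (v : ℝ))⁻¹ := fun v hv => by
    have : (v : ℝ) ≤ h := by exact_mod_cast hv
    simp only [f]; push_cast; rw [min_eq_left (by linarith)]
  have hhigh : ∑ v ∈ Ico (h + 1) (2 * h + 1), f v = ∑ v ∈ Ico 1 (h + 1), f v := calc
    _ = ∑ v ∈ Ico 1 (h + 1), f (2 * h + 1 - v) := by
      rw [sum_Ico_reflect f 1 (by omega)]; congr 2; omega
    _ = _ := sum_congr rfl fun v hv => hsymm v (by simp only [mem_Ico] at hv; omega)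
  rw [harmonic_eq_sum_Icc, ← Ico_add_one_right_eq_Icc, ← Ico_add_one_right_eq_Icc,
    ← sum_Ico_consecutive f (by omega : 1 ≤ h + 1) (by omega : h + 1 ≤ 2 * h + 1), hhigh,
    ← two_mul, mul_sum]
  push_cast
  refine sum_congr rfl fun v hv => ?_
  rw [hlow v (by simp only [mem_Ico] at hv; omega)]
  field_simp

lemma sum_Icc_inv_two_mul_min_le_log {p : ℕ} (hp : p.Prime) :
    ∑ v ∈ Icc 1 (p - 1), (2 * min (v : ℝ) (p - v))⁻¹ ≤ log p := by
  rcases hp.eq_two_or_odd' with rfl | ⟨h, rfl⟩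
  · norm_num
    linarith [log_two_gt_d9]
  · simpa [← sum_Icc_inv_two_mul_min_eq_harmonic h] using harmonic_le_log_two_mul_add_one h

lemma sum_erase_zero_comp_val {N : ℕ} [NeZero N] {E : Type*} [AddCommMonoid E] (f : ℕ → E) :
    ∑ y ∈ univ.erase (0 : ZMod N), f y.val = ∑ v ∈ Icc 1 (N - 1), f v := by
  refine sum_nbij' (fun y => y.val) (fun v => (v : ZMod N)) ?_ ?_ ?_ ?_ (fun _ _ => rfl)
  · intro y hy
    have := (ZMod.val_ne_zero y).2 (ne_of_mem_erase hy)
    have := y.val_lt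
    simp only [mem_Icc]; omega
  · intro v hv
    simp only [mem_Icc] at hv
    simp only [mem_erase, mem_univ, and_true]
    rw [ne_eq, ZMod.natCast_eq_zero_iff]
    exact Nat.not_dvd_of_pos_of_lt (by omega) (by omega)
  · intro y _; simp
  · intro v hv
    simp only [mem_Icc] at hv
    exact ZMod.val_natCast_of_lt (by omega)

lemma sum_norm_sum_Icc_stdAddChar_mul_le {p : ℕ} [Fact p.Prime] (M : ℕ) :
    ∑ y ∈ univ.erase (0 : ZMod p), ‖∑ n ∈ Icc 1 M, ZMod.stdAddChar (y * (n : ZMod p))‖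
      ≤ p * log p :=
  calc _ ≤ ∑ y ∈ univ.erase (0 : ZMod p), (p : ℝ) * (2 * min (y.val : ℝ) (p - y.val))⁻¹ :=
        sum_le_sum fun y hy => norm_sum_Icc_stdAddChar_mul_le (ne_of_mem_erase hy) M
    _ = p * ∑ v ∈ Icc 1 (p - 1), (2 * min (v : ℝ) (p - v))⁻¹ := by
        rw [← mul_sum, sum_erase_zero_comp_val (fun v => (2 * min (v : ℝ) (p - v))⁻¹)]
    _ ≤ p * log p := by gcongr; exact sum_Icc_inv_two_mul_min_le_log Fact.out

lemma strictMono_natFloor_mul_add {α β : ℝ} (hα : 1 ≤ α) (hβ : 0 ≤ β) :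
    StrictMono fun n : ℕ => ⌊n * α + β⌋₊ := by
  refine strictMono_nat_of_lt_succ fun n => ?_
  have h : (n : ℝ) * α + β + 1 ≤ (n + 1 : ℕ) * α + β := by push_cast; linarith
  calc ⌊n * α + β⌋₊ < ⌊(n : ℝ) * α + β + 1⌋₊ := by
        rw [Nat.floor_add_one (by positivity)]; omega
    _ ≤ _ := Nat.floor_le_floor h

lemma sub_sub_div_lt_card_filter_beatty {α β : ℝ} (hα : 1 ≤ α) (hβ : 0 ≤ β) (M : ℕ) :
    ((M : ℝ) - β - α) / α < #((Icc 1 M).filter fun m : ℕ => (m : ℤ) ∈ Beatty α β) := by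
  have hα₀ : 0 < α := by linarith
  set K := ⌊((M : ℝ) - β) / α⌋₊
  have hmaps : ∀ n ∈ Icc 1 K, ⌊(n : ℝ) * α + β⌋₊ ∈
      (Icc 1 M).filter fun m : ℕ => (m : ℤ) ∈ Beatty α β := by
    intro n hn
    obtain ⟨hn₁, hnK⟩ := mem_Icc.1 hn
    have hn₁' : (1 : ℝ) ≤ n := by exact_mod_cast hn₁
    have hnM : (n : ℝ) * α + β ≤ M := by
      have hnK' := (Nat.le_floor_iff' (by omega)).1 hnK
      rw [le_div_iff₀ hα₀] at hnK'; linarith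
    refine mem_filter.2 ⟨mem_Icc.2 ⟨?_, Nat.floor_le_of_le hnM⟩, n, hn₁, ?_⟩
    · exact Nat.one_le_floor_iff _ |>.2 (by nlinarith)
    · exact Int.natCast_floor_eq_floor (by positivity)
  have hcard := card_le_card_of_injOn _ hmaps (strictMono_natFloor_mul_add hα hβ).injective.injOn
  rw [Nat.card_Icc, Nat.add_sub_cancel] at hcard
  calc ((M : ℝ) - β - α) / α = ((M : ℝ) - β) / α - 1 := by field_simp
    _ < K := Nat.sub_one_lt_floor _
    _ ≤ _ := by exact_mod_cast hcard

lemma sum_norm_sum_Icc_stdAddChar_mul_mul_norm_le {p : ℕ} [Fact p.Prime] (M : ℕ)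
    (W : ZMod p → ℂ) {B : ℝ} (hB : 0 ≤ B) (hW : ∀ y ≠ 0, ‖W y‖ ≤ B) :
    ∑ y ∈ univ.erase (0 : ZMod p),
        ‖∑ n ∈ Icc 1 M, ZMod.stdAddChar (y * (n : ZMod p))‖ * ‖W y‖ ≤ p * log p * B :=
  calc _ ≤ ∑ y ∈ univ.erase (0 : ZMod p),
          ‖∑ n ∈ Icc 1 M, ZMod.stdAddChar (y * (n : ZMod p))‖ * B :=
        sum_le_sum fun y hy => by gcongr; exact hW y (ne_of_mem_erase hy)
    _ ≤ p * log p * B := by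
        rw [← sum_mul]; gcongr; exact sum_norm_sum_Icc_stdAddChar_mul_le M

theorem hyperbola_point_from_expsum_bound (p : ℕ) (hp : p.Prime) (z : ℤ)
    (hz : ¬ ((p : ℤ) ∣ z)) (α β : ℝ) (hα : 1 ≤ α) (hβ : 0 ≤ β)
    (M : ℕ) (hM0 : 0 < M) (hMp : M < p)
    (hyp : ∀ y : ℕ, 1 ≤ y → y < p →
      ‖(∑ m ∈ (Finset.Icc 1 M).filter (fun m : ℕ => (m : ℤ) ∈ Beatty α β),
          ep p ((y : ZMod p) * (m : ZMod p)⁻¹))‖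
        ≤ (M : ℝ) * ((M : ℝ) - β - α) / ((p : ℝ) * Real.log p * α)) :
    ∃ m mt : ℕ, 1 ≤ m ∧ m < p ∧ 1 ≤ mt ∧ mt < p ∧ (m : ℤ) ∈ Beatty α β ∧
      ((m * mt : ℕ) : ZMod p) = (z : ZMod p) ∧ max m mt ≤ M := by
  have := Fact.mk hp
  set S := (Icc 1 M).filter fun m : ℕ => (m : ℤ) ∈ Beatty α β
  set B := (M : ℝ) * ((M : ℝ) - β - α) / ((p : ℝ) * log p * α)
  have hz₀ : (z : ZMod p) ≠ 0 := mt (ZMod.intCast_zmod_eq_zero_iff_dvd z p).1 hz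
  simp only [ep_eq_stdAddChar] at hyp
  have hW : ∀ y : ZMod p, y ≠ 0 →
      ‖∑ m ∈ S, ZMod.stdAddChar (-(y * ((z : ZMod p) * (m : ZMod p)⁻¹)))‖ ≤ B := by
    intro y hy
    have hu : -(y * (z : ZMod p)) ≠ 0 := neg_ne_zero.2 (mul_ne_zero hy hz₀)
    simpa only [ZMod.natCast_zmod_val, neg_mul, mul_assoc] using
      hyp _ (Nat.one_le_iff_ne_zero.2 ((ZMod.val_ne_zero _).2 hu)) (ZMod.val_lt _)
  have hB : 0 ≤ B := (norm_nonneg _).trans (hyp 1 le_rfl hp.one_lt)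
  have hMS : p * log p * B < #(Icc 1 M) * #S := by
    have : (0 : ℝ) < p := by exact_mod_cast hp.pos
    have : 0 < log p := log_pos (by exact_mod_cast hp.one_lt)
    calc p * log p * B = M * (((M : ℝ) - β - α) / α) := by simp only [B]; field_simp
      _ < M * #S := by gcongr; exact sub_sub_div_lt_card_filter_beatty hα hβ M
      _ = #(Icc 1 M) * #S := by simp
  obtain ⟨n, hn, m, hm, hnm⟩ := AddChar.exists_eq_of_sum_norm_mul_norm_lt
    (ZMod.isPrimitive_stdAddChar p) _ _ _ _
    ((sum_norm_sum_Icc_stdAddChar_mul_mul_norm_le M _ hB hW).trans_lt hMS)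
  obtain ⟨hn₁, hnM⟩ := mem_Icc.1 hn
  obtain ⟨⟨hm₁, hmM⟩, hmB⟩ : (1 ≤ m ∧ m ≤ M) ∧ (m : ℤ) ∈ Beatty α β := by
    simpa only [S, mem_filter, mem_Icc] using hm
  have hm₀ : (m : ZMod p) ≠ 0 := by
    rw [ne_eq, ZMod.natCast_eq_zero_iff]; exact Nat.not_dvd_of_pos_of_lt hm₁ (by omega)
  refine ⟨m, n, hm₁, by omega, hn₁, by omega, hmB, ?_, max_le hmM hnM⟩
  rw [Nat.cast_mul, mul_comm]
  exact (eq_mul_inv_iff_mul_eq₀ hm₀).1 hnm
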